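/- The discrete Liouville invariant F_0 = (t_2/(t_1-1) + 1)((t-1)/t_1 + 1) is annihilated by both characteristic vector fields: X_1 F_0 = 0 and X_{-1} F_0 = 0. -/

import Mathlib

/-- The invariant of the discrete Liouville equation. -/
noncomputable def F0 (t t1 t2 : ℝ) : ℝ := (t2 / (t1 - 1) + 1) * ((t - 1) / t1 + 1)

lemma hasDerivAt_F0_t (t t1 t2 : ℝ) :
    HasDerivAt (fun s => F0 s t1 t2) ((t2 / (t1 - 1) + 1) / t1) t := by
  simpa [F0, div_eq_mul_inv] using
    ((((hasDerivAt_id t).sub_const 1).div_const t1).add_const 1).const_mul (t2 / (t1 - 1) + 1)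

lemma hasDerivAt_F0_t1 (t t1 t2 : ℝ) (ht10 : t1 ≠ 0) (ht1 : t1 ≠ 1) :
    HasDerivAt (fun s => F0 t s t2)
      (-t2 / (t1 - 1) ^ 2 * ((t - 1) / t1 + 1) + (t2 / (t1 - 1) + 1) * (-(t - 1) / t1 ^ 2))
      t1 := by
  have hleft : HasDerivAt (fun s => t2 / (s - 1) + 1) (-t2 / (t1 - 1) ^ 2) t1 := by
    simpa [div_eq_mul_inv, neg_div] using
      ((((hasDerivAt_id t1).sub_const 1).inv (sub_ne_zero.mpr ht1)).const_mul t2).add_const 1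
  have hright : HasDerivAt (fun s => (t - 1) / s + 1) (-(t - 1) / t1 ^ 2) t1 := by
    simpa [div_eq_mul_inv, neg_div, -neg_sub] using
      (((hasDerivAt_id t1).inv ht10).const_mul (t - 1)).add_const 1
  exact hleft.mul hright

lemma hasDerivAt_F0_t2 (t t1 t2 : ℝ) :
    HasDerivAt (fun s => F0 t t1 s) (((t - 1) / t1 + 1) / (t1 - 1)) t2 := by
  simpa [F0, div_eq_mul_inv, mul_comm] using
    (((hasDerivAt_id t2).div_const (t1 - 1)).add_const 1).mul_const ((t - 1) / t1 + 1)

theorem stmt15 (t t1 t2 : ℝ) (ht0 : t ≠ 0) (ht : t ≠ 1) (ht10 : t1 ≠ 0) (ht1 : t1 ≠ 1) :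
    (deriv (fun s => F0 s t1 t2) t
      + t1 / (t - 1) * deriv (fun s => F0 t s t2) t1
      + t1 * t2 / ((t - 1) * (t1 - 1)) * deriv (fun s => F0 t t1 s) t2 = 0) ∧
    (deriv (fun s => F0 s t1 t2) t
      + (t1 - 1) / t * deriv (fun s => F0 t s t2) t1
      + (t1 - 1) * (t2 - 1) / (t * t1) * deriv (fun s => F0 t t1 s) t2 = 0) := by
  have ht' : t - 1 ≠ 0 := sub_ne_zero.mpr ht
  have ht1' : t1 - 1 ≠ 0 := sub_ne_zero.mpr ht1
  rw [(hasDerivAt_F0_t t t1 t2).deriv, (hasDerivAt_F0_t1 t t1 t2 ht10 ht1).deriv,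
    (hasDerivAt_F0_t2 t t1 t2).deriv]
  constructor <;> (field_simp; ring)
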